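/- For every m and all n ≥ 1, the number of m-tame 2-colorings (n,χ) of the complete graph on [n] is at most (2n)^{2m^5+m}. -/
import Mathlib


/-- A (directed representation of an) edge: a pair of vertices `p` with `p.1 < p.2`. -/
abbrev Edge (n : ℕ) := {p : Fin n × Fin n // p.1 < p.2}

/-- An edge-`C`-colored complete graph: a number of vertices together with a coloring
of all edges by elements of `C`. -/
abbrev Coloring (C : Type) := (n : ℕ) × (Edge n → C)

/-- Build an edge from natural numbers `i < j < n`. -/
def mkE {n : ℕ} (i j : ℕ) (hij : i < j) (hj : j < n) : Edge n :=
  ⟨(⟨i, lt_trans hij hj⟩, ⟨j, hj⟩), Fin.mk_lt_mk.mpr hij⟩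

/-- The image of an edge under a strictly increasing vertex map. -/
def edgeMap {a b : ℕ} (f : Fin a → Fin b) (hf : StrictMono f) (e : Edge a) : Edge b :=
  ⟨(f e.1.1, f e.1.2), hf e.2⟩

/-- Containment of colorings: `K ⪯ L` via a strictly increasing vertex map that sends
the color of each edge to a `le`-larger color. -/
def ColLe {C : Type} (le : C → C → Prop) (K L : Coloring C) : Prop :=
  ∃ f : Fin K.1 → Fin L.1, ∃ hf : StrictMono f,
    ∀ e : Edge K.1, le (K.2 e) (L.2 (edgeMap f hf e))

/-- A lower ideal of colorings. -/
def IsIdeal {C : Type} (le : C → C → Prop) (X : Set (Coloring C)) : Prop :=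
  ∀ K L : Coloring C, ColLe le K L → L ∈ X → K ∈ X

/-- An `m`-tame 2-coloring `(n,χ)`:
(1) `[n]` partitions into at most `m` monochromatic intervals (the fibers of a monotone
map into `Fin m`);
(2) for row vertex `u` to the left of any interval `J = [lo,hi]`, the row of the matrix
`M_{I,J}` has at most `m` maximal constant intervals, i.e. at most `m-1` changes between
consecutive columns (and symmetrically for columns);
(3) for any two intervals `I = [ilo,ihi] < J = [jlo,jhi]`, the set `C(M_{I,J})` of row
indices where some column changes has at most `m` elements. -/
def Tame (m n : ℕ) (χ : Edge n → Fin 2) : Prop :=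
  (∃ f : Fin n → Fin m, Monotone f ∧
    ∀ (i j i' j' : ℕ) (hij : i < j) (hij' : i' < j') (hj : j < n) (hj' : j' < n),
      f ⟨i, by omega⟩ = f ⟨j, hj⟩ → f ⟨i', by omega⟩ = f ⟨j', hj'⟩ →
      f ⟨j, hj⟩ = f ⟨i', by omega⟩ →
      χ (mkE i j hij hj) = χ (mkE i' j' hij' hj')) ∧
  (∀ u lo hi : ℕ, u < lo →
    Nat.card {w : ℕ // lo ≤ w ∧ w + 1 ≤ hi ∧ ∃ (hw : w + 1 < n) (h1 : u < w),
      χ (mkE u w h1 (by omega)) ≠ χ (mkE u (w + 1) (by omega) hw)} ≤ m - 1) ∧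
  (∀ (w lo hi : ℕ), hi < w → ∀ hw : w < n,
    Nat.card {u : ℕ // lo ≤ u ∧ u + 1 ≤ hi ∧ ∃ h1 : u + 1 < w,
      χ (mkE u w (by omega) hw) ≠ χ (mkE (u + 1) w h1 hw)} ≤ m - 1) ∧
  (∀ ilo ihi jlo jhi : ℕ, ihi < jlo →
    Nat.card {u : ℕ // ilo ≤ u ∧ u + 1 ≤ ihi ∧ ∃ w : ℕ, jlo ≤ w ∧ w ≤ jhi ∧
      ∃ (hw : w < n) (h1 : u + 1 < w),
        χ (mkE u w (by omega) hw) ≠ χ (mkE (u + 1) w h1 hw)} ≤ m)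


section AuxTame
open Finset
variable {m n : ℕ}


/-- total version of χ on naturals -/
noncomputable def cE (n : ℕ) (χ : Edge n → Fin 2) (u w : ℕ) : Fin 2 :=
  if h : u < w ∧ w < n then χ (mkE u w h.1 h.2) else 0

lemma cE_mk {χ : Edge n → Fin 2} {u w : ℕ} (h1 : u < w) (h2 : w < n) :
    cE n χ u w = χ (mkE u w h1 h2) := by
  rw [cE, dif_pos ⟨h1, h2⟩]

lemma chi_eq_cE (χ : Edge n → Fin 2) (e : Edge n) :
    χ e = cE n χ e.1.1.val e.1.2.val := by
  rcases e with ⟨⟨a, b⟩, h⟩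
  rw [cE_mk (h : a.val < b.val) b.isLt]
  rfl

/-- down-closed subsets of `Fin n` are initial segments -/
lemma down_lemma {D : Finset (Fin n)} (hD : ∀ a b : Fin n, a ≤ b → b ∈ D → a ∈ D)
    (v : Fin n) : v ∈ D ↔ v.val < D.card := by
  constructor
  · intro hv
    have h1 : Finset.Iic v ⊆ D := fun a ha => hD a v (Finset.mem_Iic.mp ha) hv
    have := Finset.card_le_card h1
    rw [Fin.card_Iic] at this; omega
  · intro hv
    by_contra hvD
    have h1 : D ⊆ Finset.Iio v := by
      intro a ha
      rw [Finset.mem_Iio]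
      by_contra hav
      exact hvD (hD v a (not_lt.mp hav) ha)
    have := Finset.card_le_card h1
    rw [Fin.card_Iio] at this; omega

/-- threshold: number of `v` with `f v ≤ s` -/
noncomputable def thr (f : Fin n → Fin m) (s : Fin m) : ℕ :=
  (Finset.univ.filter (fun v => f v ≤ s)).card

/-- number of `v` with `f v < s` -/
noncomputable def lth (f : Fin n → Fin m) (s : Fin m) : ℕ :=
  (Finset.univ.filter (fun v => f v < s)).card

lemma thr_le (f : Fin n → Fin m) (s : Fin m) : thr f s ≤ n := by
  have := Finset.card_filter_le Finset.univ (fun v => f v ≤ s)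
  simpa [thr] using this

lemma lt_thr_iff {f : Fin n → Fin m} (hf : Monotone f) (v : Fin n) (s : Fin m) :
    v.val < thr f s ↔ f v ≤ s := by
  rw [thr]
  rw [← down_lemma (fun a b hab hb => by
    simp only [Finset.mem_filter, Finset.mem_univ, true_and] at *
    exact le_trans (hf hab) hb) v]
  simp

lemma lt_lth_iff {f : Fin n → Fin m} (hf : Monotone f) (v : Fin n) (s : Fin m) :
    v.val < lth f s ↔ f v < s := by
  rw [lth]
  rw [← down_lemma (fun a b hab hb => by
    simp only [Finset.mem_filter, Finset.mem_univ, true_and] at *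
    exact lt_of_le_of_lt (hf hab) hb) v]
  simp

lemma f_eq_of_thr_eq {f f' : Fin n → Fin m} (hf : Monotone f) (hf' : Monotone f')
    (h : ∀ s, thr f s = thr f' s) : f = f' := by
  funext v
  refine le_antisymm ?_ ?_
  · rw [← lt_thr_iff hf v (f' v), h]
    exact (lt_thr_iff hf' v (f' v)).mpr le_rfl
  · rw [← lt_thr_iff hf' v (f v), ← h]
    exact (lt_thr_iff hf v (f v)).mpr le_rfl


lemma f_eq_of_bounds {f : Fin n → Fin m} (hf : Monotone f) {v : ℕ} (hv : v < n) (s : Fin m)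
    (h1 : lth f s ≤ v) (h2 : v < thr f s) : f ⟨v, hv⟩ = s := by
  have ha : f ⟨v, hv⟩ ≤ s := (lt_thr_iff hf ⟨v, hv⟩ s).mp h2
  have hb : ¬ f ⟨v, hv⟩ < s := fun hc => by
    have hc2 : v < lth f s := (lt_lth_iff hf ⟨v, hv⟩ s).mpr hc
    omega
  exact le_antisymm ha (not_lt.mp hb)

/-- encode a finite set of naturals `< n` as a padded sorted tuple -/
noncomputable def encSet (m n : ℕ) (S : Finset ℕ) : Fin m → Fin (n + 1) :=
  fun k => ⟨min ((S.sort (· ≤ ·)).getD k.val n) n, by omega⟩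

lemma encSet_mem_iff {S : Finset ℕ} (hS : ∀ x ∈ S, x < n) (hc : S.card ≤ m) (v : ℕ) :
    v ∈ S ↔ ∃ k : Fin m, (encSet m n S k).val = v ∧ v < n := by
  constructor
  · intro hv
    have hv' : v ∈ S.sort (· ≤ ·) := (Finset.mem_sort _).mpr hv
    obtain ⟨i, hi, hget⟩ := List.getElem_of_mem hv'
    have hlen : (S.sort (· ≤ ·)).length = S.card := Finset.length_sort _
    have him : i < m := by omega
    refine ⟨⟨i, him⟩, ?_, hS v hv⟩
    simp only [encSet]
    rw [List.getD_eq_getElem _ _ (by omega), hget]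
    exact Nat.min_eq_left (le_of_lt (hS v hv))
  · rintro ⟨k, hk, hvn⟩
    simp only [encSet] at hk
    by_cases hkl : k.val < (S.sort (· ≤ ·)).length
    · rw [List.getD_eq_getElem _ _ hkl] at hk
      have hmem : (S.sort (· ≤ ·))[k.val] ∈ S :=
        (Finset.mem_sort _).mp (List.getElem_mem _)
      have := hS _ hmem
      rw [Nat.min_eq_left (le_of_lt this)] at hk
      rwa [hk] at hmem
    · rw [List.getD_eq_default _ _ (by omega)] at hk
      simp at hk; omega

lemma encSet_inj {S S' : Finset ℕ} (hS : ∀ x ∈ S, x < n) (hS' : ∀ x ∈ S', x < n)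
    (hc : S.card ≤ m) (hc' : S'.card ≤ m) (h : encSet m n S = encSet m n S') : S = S' := by
  ext v
  rw [encSet_mem_iff hS hc, encSet_mem_iff hS' hc', h]

lemma fin2_step {a b a' b' : Fin 2} (h : a = a') (hab : (a = b) ↔ (a' = b')) : b = b' := by
  subst h; revert hab; revert a b b'; decide


noncomputable def CsetF (n : ℕ) (χ : Edge n → Fin 2) (gs : ℕ) : Finset ℕ :=
  @Finset.filter ℕ
    (fun u => u + 1 < gs ∧ ∃ w, gs ≤ w ∧ w < n ∧ cE n χ u w ≠ cE n χ (u + 1) w)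
    (fun _ => Classical.propDecidable _) (Finset.range n)

lemma mem_CsetF {χ : Edge n → Fin 2} {gs u : ℕ} :
    u ∈ CsetF n χ gs ↔
      u < n ∧ u + 1 < gs ∧ ∃ w, gs ≤ w ∧ w < n ∧ cE n χ u w ≠ cE n χ (u + 1) w := by
  rw [CsetF, @Finset.mem_filter _ _ (fun _ => Classical.propDecidable _), Finset.mem_range]

noncomputable def DsetF (n : ℕ) (χ : Edge n → Fin 2) (gs u : ℕ) : Finset ℕ :=
  @Finset.filter ℕ
    (fun w => gs ≤ w ∧ w + 1 < n ∧ cE n χ u w ≠ cE n χ u (w + 1))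
    (fun _ => Classical.propDecidable _) (Finset.range n)

lemma mem_DsetF {χ : Edge n → Fin 2} {gs u w : ℕ} :
    w ∈ DsetF n χ gs u ↔
      w < n ∧ gs ≤ w ∧ w + 1 < n ∧ cE n χ u w ≠ cE n χ u (w + 1) := by
  rw [DsetF, @Finset.mem_filter _ _ (fun _ => Classical.propDecidable _), Finset.mem_range]

/-- card bound for `CsetF` from tameness -/
lemma CsetF_card_le {χ : Edge n → Fin 2} (h : Tame m n χ) {gs : ℕ} (hgs : gs ≤ n) :
    (CsetF n χ gs).card ≤ m := by
  rcases Nat.eq_zero_or_pos gs with h0 | h1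
  · have : CsetF n χ gs = ∅ := by
      ext u; simp [mem_CsetF, h0]
    simp [this]
  · have h3 := h.2.2.2 0 (gs - 1) gs (n - 1) (by omega)
    calc (CsetF n χ gs).card = Nat.card {u // u ∈ CsetF n χ gs} :=
          (Nat.card_eq_finsetCard _).symm
      _ = _ := Nat.card_congr (Equiv.subtypeEquivRight ?_)
      _ ≤ m := h3
    intro u
    rw [mem_CsetF]
    constructor
    · rintro ⟨hun, hug, w, hw1, hw2, hne⟩
      refine ⟨Nat.zero_le _, by omega, w, hw1, by omega, hw2, by omega, ?_⟩
      rw [cE_mk (u := u) (show u < w by omega) hw2,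
        cE_mk (u := u + 1) (show u + 1 < w by omega) hw2] at hne
      exact hne
    · rintro ⟨-, hug, w, hw1, hw2, hw3, h4, hne⟩
      refine ⟨by omega, by omega, w, hw1, hw3, ?_⟩
      rw [cE_mk (by omega) hw3, cE_mk (by omega) hw3]
      exact hne

/-- card bound for `DsetF` from tameness -/
lemma DsetF_card_le {χ : Edge n → Fin 2} (h : Tame m n χ) {gs u : ℕ} (hu : u < gs) :
    (DsetF n χ gs u).card ≤ m := by
  have h2 := h.2.1 u gs (n - 1) hu
  have key : (DsetF n χ gs u).card ≤ m - 1 := by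
    calc (DsetF n χ gs u).card = Nat.card {w // w ∈ DsetF n χ gs u} :=
          (Nat.card_eq_finsetCard _).symm
      _ = _ := Nat.card_congr (Equiv.subtypeEquivRight ?_)
      _ ≤ m - 1 := h2
    intro w
    rw [mem_DsetF]
    constructor
    · rintro ⟨hwn, hw1, hw2, hne⟩
      refine ⟨hw1, by omega, hw2, by omega, ?_⟩
      rw [cE_mk (w := w) (show u < w by omega) (by omega),
        cE_mk (w := w + 1) (show u < w + 1 by omega) hw2] at hne
      exact hne
    · rintro ⟨hw1, hw2, hw3, h4, hne⟩
      refine ⟨by omega, hw1, by omega, ?_⟩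
      rw [cE_mk (by omega) (by omega), cE_mk (by omega) hw3]
      exact hne
  omega

/-- vertex of the `k`-th recorded row -/
def rowV (as : ℕ) (c : Fin m → Fin (n + 1)) (k : Fin (m + 1)) : ℕ :=
  if h : k.val = 0 then as else (c ⟨k.val - 1, by omega⟩).val + 1

/-- a single row is determined by its base value and change set -/
lemma row_det {χ χ' : Edge n → Fin 2} {gs u : ℕ}
    (hD : DsetF n χ gs u = DsetF n χ' gs u)
    (hbase : cE n χ u gs = cE n χ' u gs) :
    ∀ w, gs ≤ w → w < n → cE n χ u w = cE n χ' u w := by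
  intro w hgw
  induction w, hgw using Nat.le_induction with
  | base => intro _; exact hbase
  | succ w hgw IH =>
    intro hwn
    have hwn' : w < n := by omega
    have ha := IH hwn'
    by_cases hmem : w ∈ DsetF n χ gs u
    · have hmem' : w ∈ DsetF n χ' gs u := hD ▸ hmem
      rw [mem_DsetF] at hmem hmem'
      exact fin2_step ha (iff_of_false hmem.2.2.2 hmem'.2.2.2)
    · have hmem' : w ∉ DsetF n χ' gs u := hD ▸ hmem
      rw [mem_DsetF] at hmem hmem'
      push_neg at hmem hmem'
      have e1 : cE n χ u w = cE n χ u (w + 1) := hmem hwn' hgw hwn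
      have e2 : cE n χ' u w = cE n χ' u (w + 1) := hmem' hwn' hgw hwn
      rw [← e1, ← e2]; exact ha

/-- a whole block is determined by the recorded rows and change-row set -/
lemma block_det {χ χ' : Edge n → Fin 2} {gs as : ℕ} (hgs : gs ≤ n)
    (hC : CsetF n χ gs = CsetF n χ' gs)
    (hCcard : (CsetF n χ gs).card ≤ m)
    (hrows : ∀ k : Fin (m + 1),
      rowV as (encSet m n (CsetF n χ gs)) k < gs →
      cE n χ (rowV as (encSet m n (CsetF n χ gs)) k) gs
        = cE n χ' (rowV as (encSet m n (CsetF n χ gs)) k) gs ∧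
      DsetF n χ gs (rowV as (encSet m n (CsetF n χ gs)) k)
        = DsetF n χ' gs (rowV as (encSet m n (CsetF n χ gs)) k)) :
    ∀ u, as ≤ u → u < gs → ∀ w, gs ≤ w → w < n → cE n χ u w = cE n χ' u w := by
  intro u
  induction u using Nat.strong_induction_on with
  | _ u IH =>
    intro hau hug
    rcases Nat.eq_or_lt_of_le hau with heq | hlt
    · -- u = as : recorded row 0
      have h0 : rowV as (encSet m n (CsetF n χ gs)) 0 = as := by simp [rowV]
      have hr := hrows 0 (by rw [h0]; omega)
      rw [h0, heq] at hr
      exact row_det hr.2 hr.1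
    · set v := u - 1 with hv
      have hvu : v < u := by omega
      have hva : as ≤ v := by omega
      have hvg : v < gs := by omega
      by_cases hmem : v ∈ CsetF n χ gs
      · have hvn : v < n := by omega
        obtain ⟨k, hk, -⟩ := (encSet_mem_iff
          (fun x hx => (mem_CsetF.mp hx).1) hCcard v).mp hmem
        have h1 : rowV as (encSet m n (CsetF n χ gs)) ⟨k.val + 1, by omega⟩ = u := by
          simp only [rowV, dif_neg (by simp : ¬(k.val + 1 = 0))]
          have : (⟨k.val + 1 - 1, by omega⟩ : Fin m) = k := by
            apply Fin.ext; simp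
          rw [this, hk]; omega
        have hr := hrows ⟨k.val + 1, by omega⟩ (by rw [h1]; exact hug)
        rw [h1] at hr
        exact row_det hr.2 hr.1
      · have hmem' : v ∉ CsetF n χ' gs := hC ▸ hmem
        rw [mem_CsetF] at hmem hmem'
        push_neg at hmem hmem'
        have hvn : v < n := by omega
        have hv1 : v + 1 = u := by omega
        intro w hgw hwn
        have e1 : cE n χ v w = cE n χ (v + 1) w := hmem hvn (by omega) w hgw hwn
        have e2 : cE n χ' v w = cE n χ' (v + 1) w := hmem' hvn (by omega) w hgw hwn
        rw [← hv1, ← e1, ← e2]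
        exact IH v hvu hva hvg w hgw hwn

end AuxTame


section Code
open Finset
variable {m n : ℕ}

abbrev CodeT (m n : ℕ) :=
  (Fin m → Fin (n + 1)) × (Fin m → Fin 2) ×
    (Fin m → (Fin m → Fin (n + 1)) × (Fin (m + 1) → Fin 2 × (Fin m → Fin (n + 1))))

noncomputable def chooseF (m n : ℕ) (x : {χ : Edge n → Fin 2 // Tame m n χ}) :
    Fin n → Fin m :=
  x.2.1.choose

lemma chooseF_mono (x : {χ : Edge n → Fin 2 // Tame m n χ}) :
    Monotone (chooseF m n x) := x.2.1.choose_spec.1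

lemma chooseF_prop (x : {χ : Edge n → Fin 2 // Tame m n χ}) :
    ∀ (i j i' j' : ℕ) (hij : i < j) (hij' : i' < j') (hj : j < n) (hj' : j' < n),
      chooseF m n x ⟨i, by omega⟩ = chooseF m n x ⟨j, hj⟩ →
      chooseF m n x ⟨i', by omega⟩ = chooseF m n x ⟨j', hj'⟩ →
      chooseF m n x ⟨j, hj⟩ = chooseF m n x ⟨i', by omega⟩ →
      x.1 (mkE i j hij hj) = x.1 (mkE i' j' hij' hj') := x.2.1.choose_spec.2

lemma same_interval_eq (x : {χ : Edge n → Fin 2 // Tame m n χ}) {u w v : ℕ}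
    (hu : u < w) (hw : w < n) (hv : v + 1 < n)
    (h1 : chooseF m n x ⟨u, by omega⟩ = chooseF m n x ⟨w, hw⟩)
    (h2 : chooseF m n x ⟨v, by omega⟩ = chooseF m n x ⟨v + 1, hv⟩)
    (h3 : chooseF m n x ⟨w, hw⟩ = chooseF m n x ⟨v, by omega⟩) :
    x.1 (mkE u w hu hw) = x.1 (mkE v (v + 1) (lt_add_one v) hv) :=
  chooseF_prop x u w v (v + 1) hu (lt_add_one v) hw hv h1 h2 h3

noncomputable def code (m n : ℕ) (x : {χ : Edge n → Fin 2 // Tame m n χ}) : CodeT m n :=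
  ⟨fun s => ⟨thr (chooseF m n x) s, by have := thr_le (chooseF m n x) s; omega⟩,
   fun s => cE n x.1 (lth (chooseF m n x) s) (lth (chooseF m n x) s + 1),
   fun s =>
     ⟨encSet m n (CsetF n x.1 (thr (chooseF m n x) s)),
      fun k =>
        (cE n x.1 (rowV (lth (chooseF m n x) s)
            (encSet m n (CsetF n x.1 (thr (chooseF m n x) s))) k) (thr (chooseF m n x) s),
         encSet m n (DsetF n x.1 (thr (chooseF m n x) s)
           (rowV (lth (chooseF m n x) s)
             (encSet m n (CsetF n x.1 (thr (chooseF m n x) s))) k)))⟩⟩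

lemma code_inj (m n : ℕ) (hn : 1 ≤ n) :
    Function.Injective (code m n) := by
  intro x x' hxx
  simp only [code, Prod.mk.injEq] at hxx
  obtain ⟨hxx1, hxx2, hxx3⟩ := hxx
  have c1 : ∀ s, thr (chooseF m n x) s = thr (chooseF m n x') s := fun s =>
    congrArg Fin.val (congrFun hxx1 s)
  have hff : chooseF m n x = chooseF m n x' :=
    f_eq_of_thr_eq (chooseF_mono x) (chooseF_mono x') c1
  rw [← hff] at hxx2 hxx3
  set f := chooseF m n x with hfdef
  have hmono : Monotone f := chooseF_mono x
  apply Subtype.ext; funext e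
  rw [chi_eq_cE x.1 e, chi_eq_cE x'.1 e]
  have hu : e.1.1.val < e.1.2.val := e.2
  have hw : e.1.2.val < n := e.1.2.isLt
  have hst : f e.1.1 ≤ f e.1.2 := hmono (le_of_lt e.2)
  rcases eq_or_lt_of_le hst with hstE | hstL
  · -- same interval: use property (1)
    set s := f e.1.1 with hs
    set as := lth f s with has
    have hugs : e.1.1.val < thr f s := (lt_thr_iff hmono e.1.1 s).mpr le_rfl
    have hwgs : e.1.2.val < thr f s := (lt_thr_iff hmono e.1.2 s).mpr (le_of_eq hstE.symm)
    have haus : ¬ (e.1.1.val < as) := fun hc => by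
      have := (lt_lth_iff hmono e.1.1 s).mp hc
      exact absurd rfl (ne_of_lt this)
    have hasn : as + 1 < n := by
      have := thr_le f s; omega
    have hfas : f ⟨as, by omega⟩ = s :=
      f_eq_of_bounds hmono (by omega) s (by omega) (by omega)
    have hfas1 : f ⟨as + 1, hasn⟩ = s :=
      f_eq_of_bounds hmono hasn s (by omega) (by omega)
    have hA : f e.1.1 = f e.1.2 := by rw [← hs, hstE]
    have hB : f ⟨as, by omega⟩ = f ⟨as + 1, hasn⟩ := by rw [hfas, hfas1]
    have hCq : f e.1.2 = f ⟨as, by omega⟩ := by rw [hfas, ← hstE]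
    have e1 : x.1 (mkE e.1.1.val e.1.2.val hu hw)
        = x.1 (mkE as (as + 1) (lt_add_one as) hasn) :=
      same_interval_eq x hu hw hasn hA hB hCq
    have e2 : x'.1 (mkE e.1.1.val e.1.2.val hu hw)
        = x'.1 (mkE as (as + 1) (lt_add_one as) hasn) :=
      same_interval_eq x' hu hw hasn (by rw [← hff]; exact hA) (by rw [← hff]; exact hB)
        (by rw [← hff]; exact hCq)
    rw [cE_mk hu hw, cE_mk hu hw, e1, e2]
    have h2 := congrFun hxx2 s
    rw [cE_mk (lt_add_one as) hasn, cE_mk (lt_add_one as) hasn] at h2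
    exact h2
  · -- different intervals: use the block data
    set s := f e.1.1 with hs
    set as := lth f s with has
    set gs := thr f s with hgs
    have hgsn : gs ≤ n := thr_le f s
    have hugs : e.1.1.val < gs := (lt_thr_iff hmono e.1.1 s).mpr le_rfl
    have hau : ¬ (e.1.1.val < as) := fun hc => by
      have := (lt_lth_iff hmono e.1.1 s).mp hc
      exact absurd rfl (ne_of_lt this)
    have hgw : gs ≤ e.1.2.val := by
      by_contra hc
      push_neg at hc
      have := (lt_thr_iff hmono e.1.2 s).mp hc
      exact absurd (lt_of_lt_of_le hstL this) (lt_irrefl _)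
    -- extract block data at s
    have h3s := congrFun hxx3 s
    rw [Prod.mk.injEq] at h3s
    obtain ⟨h3a, h3b⟩ := h3s
    have hC : CsetF n x.1 gs = CsetF n x'.1 gs := by
      refine encSet_inj (m := m) (fun y hy => (mem_CsetF.mp hy).1)
        (fun y hy => (mem_CsetF.mp hy).1)
        (CsetF_card_le x.2 hgsn) (CsetF_card_le x'.2 hgsn) h3a
    have hrows : ∀ k : Fin (m + 1),
        rowV as (encSet m n (CsetF n x.1 gs)) k < gs →
        cE n x.1 (rowV as (encSet m n (CsetF n x.1 gs)) k) gs
          = cE n x'.1 (rowV as (encSet m n (CsetF n x.1 gs)) k) gs ∧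
        DsetF n x.1 gs (rowV as (encSet m n (CsetF n x.1 gs)) k)
          = DsetF n x'.1 gs (rowV as (encSet m n (CsetF n x.1 gs)) k) := by
      intro k hk
      have hbk := congrFun h3b k
      rw [hC] at hbk ⊢
      rw [Prod.mk.injEq] at hbk
      refine ⟨hbk.1, ?_⟩
      refine encSet_inj (m := m) (fun y hy => (mem_DsetF.mp hy).1)
        (fun y hy => (mem_DsetF.mp hy).1)
        (DsetF_card_le x.2 ?_) (DsetF_card_le x'.2 ?_) hbk.2
      · rwa [← hC]
      · rwa [← hC]
    have := block_det hgsn hC (CsetF_card_le x.2 hgsn) hrows e.1.1.val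
      (by omega) hugs e.1.2.val hgw hw
    exact this

end Code

/-- For every `m`, the number of `m`-tame 2-colorings of the complete graph
on `[n]` is at most `(2n)^{2m⁵+m}` for all `n ≥ 1` (hence polynomial in `n`). -/
theorem stmt_16 (m n : ℕ) (hn : 1 ≤ n) :
    Nat.card {χ : Edge n → Fin 2 // Tame m n χ} ≤ (2 * n) ^ (2 * m ^ 5 + m) := by
  match m with
  | 0 =>
    have : IsEmpty {χ : Edge n → Fin 2 // Tame 0 n χ} := ⟨fun x => by
      obtain ⟨f, -, -⟩ := x.2.1
      exact (f ⟨0, hn⟩).elim0⟩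
    simp [Nat.card_of_isEmpty]
  | 1 =>
    have hinj : Function.Injective
        (fun x : {χ : Edge n → Fin 2 // Tame 1 n χ} => cE n x.1 0 1) := by
      intro x x' hxy
      simp only at hxy
      apply Subtype.ext; funext e
      have hu : e.1.1.val < e.1.2.val := e.2
      have hw : e.1.2.val < n := e.1.2.isLt
      rcases Nat.lt_or_ge n 2 with h2 | h2
      · omega
      · have e1 : x.1 (mkE e.1.1.val e.1.2.val hu hw) = x.1 (mkE 0 1 one_pos (by omega)) :=
          chooseF_prop x e.1.1.val e.1.2.val 0 1 hu one_pos hw (by omega)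
            (Subsingleton.elim _ _) (Subsingleton.elim _ _) (Subsingleton.elim _ _)
        have e2 : x'.1 (mkE e.1.1.val e.1.2.val hu hw) = x'.1 (mkE 0 1 one_pos (by omega)) :=
          chooseF_prop x' e.1.1.val e.1.2.val 0 1 hu one_pos hw (by omega)
            (Subsingleton.elim _ _) (Subsingleton.elim _ _) (Subsingleton.elim _ _)
        have b1 : cE n x.1 0 1 = x.1 (mkE 0 1 one_pos (by omega)) :=
          cE_mk one_pos (by omega)
        have b2 : cE n x'.1 0 1 = x'.1 (mkE 0 1 one_pos (by omega)) :=
          cE_mk one_pos (by omega)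
        rw [chi_eq_cE x.1 e, chi_eq_cE x'.1 e, cE_mk hu hw, cE_mk hu hw]
        exact e1.trans ((b1.symm.trans (hxy.trans b2)).trans e2.symm)
    have h1 := Nat.card_le_card_of_injective _ hinj
    have h2 : Nat.card (Fin 2) = 2 := by simp
    have h3 : (2 : ℕ) ≤ (2 * n) ^ (2 * 1 ^ 5 + 1) := by
      calc (2 : ℕ) ≤ 2 * n := by omega
        _ ≤ (2 * n) ^ (2 * 1 ^ 5 + 1) := Nat.le_self_pow (by norm_num) _
    omega
  | (m + 2) =>
    set M := m + 2 with hM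
    have h1 := Nat.card_le_card_of_injective _ (code_inj M n hn)
    have h2 : Nat.card (CodeT M n)
        = (n+1)^M * (2^M * ((n+1)^M * (2^(M+1) * ((n+1)^M)^(M+1)))^M) := by
      simp [Nat.card_eq_fintype_card, Fintype.card_fun, mul_pow]
    have hA : n + 1 ≤ 2 * n := by omega
    have hB : (2 : ℕ) ≤ 2 * n := by omega
    have h3 : (n+1)^M * (2^M * ((n+1)^M * (2^(M+1) * ((n+1)^M)^(M+1)))^M)
        ≤ (2*n)^M * ((2*n)^M * ((2*n)^M * ((2*n)^(M+1) * ((2*n)^M)^(M+1)))^M) := by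
      gcongr
    have h4 : (2*n)^M * ((2*n)^M * ((2*n)^M * ((2*n)^(M+1) * ((2*n)^M)^(M+1)))^M)
        = (2*n)^(M^3 + 3*M^2 + 3*M) := by
      rw [← pow_mul, ← pow_add, ← pow_add, ← pow_mul, ← pow_add, ← pow_add]
      congr 1
      ring
    have h5 : (2*n)^(M^3 + 3*M^2 + 3*M) ≤ (2*n)^(2*M^5 + M) := by
      apply Nat.pow_le_pow_right (by omega)
      have p1 : M ^ 2 ≤ M ^ 3 := Nat.pow_le_pow_right (by omega) (by omega)
      have p2 : M ≤ M ^ 3 := Nat.le_self_pow (by omega) _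
      have p3 : 4 ≤ M ^ 2 := by
        have : 2 * 2 ≤ M * M := Nat.mul_le_mul (by omega) (by omega)
        nlinarith
      have p4 : M ^ 3 * M ^ 2 = M ^ 5 := by ring
      nlinarith [p1, p2, p3, p4]
    omega
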